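/- Let μ be a σ-finite measure on a measurable space X, let ℓ : X → ℝ be measurable with ℓ(x) > 0 for μ-a.e. x and Z := ∫ ℓ dμ ∈ (0, ∞), and let π be the probability measure with density ℓ/Z with respect to μ. Let f₁, …, f_{M̂} : X → ℝ be nonnegative measurable functions, and for w ∈ ℝ^{M̂} with w_i ≥ 0 define g_w(x) := ∑_{i=1}^{M̂} w_i f_i(x). Let W be any set of weight vectors such that for every w ∈ W: g_w(x) > 0 for μ-a.e. x, ∫ g_w dμ ∈ (0, ∞), and log ℓ and log g_w are π-integrable; let q_w be the probability measure with density g_w / ∫ g_w dμ with respect to μ. Define J(w) := ∫ log(∑_{i=1}^{M̂} w_i f_i) dπ − log ∫ exp(log ∑_{i=1}^{M̂} w_i f_i − log ℓ) dπ. Then KL(π ‖ q_w) = ∫ log ℓ dπ − J(w) for every w ∈ W; consequently w* ∈ W minimizes w ↦ KL(π ‖ q_w) over W if and only if w* maximizes J over W. In particular this holds for W equal to the admissible weights in the simplex {w : w_i ≥ 0, ∑_{i=1}^{M̂} w_i = 1}. -/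

import Mathlib

/-! Both `p` and `q w` have densities with respect to `μ`, so with the normalizing constants
`Z = ∫ ℓ dμ` and `Z_w = ∫ g_w dμ` we get `log (dp/dq_w) = log ℓ - log g_w + log (Z_w / Z)`
`p`-a.e., and integrating against `p` gives
`KL(p ‖ q_w) = ∫ log ℓ dp - ∫ log g_w dp + log (Z_w / Z)`. On the other hand
`∫ exp (log g_w - log ℓ) dp = ∫ g_w / ℓ dp = Z_w / Z`, so `J w = ∫ log g_w dp - log (Z_w / Z)`.
Since `∫ log ℓ dp` does not depend on `w`, minimizing the divergence is maximizing `J`. -/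

open MeasureTheory Real

noncomputable def klDiv {X : Type*} [MeasurableSpace X] (p q : Measure X) : ℝ :=
  ∫ x, Real.log ((p.rnDeriv q) x).toReal ∂p

section

variable {X : Type*} [MeasurableSpace X] {μ : Measure X}

lemma rnDeriv_withDensity_withDensity {f g : X → ENNReal} [SigmaFinite (μ.withDensity g)]
    (hf : AEMeasurable f μ) (hg : AEMeasurable g μ) (hg_ne_zero : ∀ᵐ x ∂μ, g x ≠ 0)
    (hg_ne_top : ∀ᵐ x ∂μ, g x ≠ ⊤) :
    (μ.withDensity f).rnDeriv (μ.withDensity g) =ᵐ[μ] f / g := by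
  have hμ_ac : μ ≪ μ.withDensity g := withDensity_absolutelyContinuous' hg hg_ne_zero
  have hdens : (μ.withDensity g).withDensity (f / g) = μ.withDensity f := by
    rw [← withDensity_mul₀ hg (hf.div hg)]
    refine withDensity_congr_ae ?_
    filter_upwards [hg_ne_zero, hg_ne_top] with x hx0 hxtop
    exact ENNReal.mul_div_cancel hx0 hxtop
  have hfg : AEMeasurable (f / g) (μ.withDensity g) :=
    (hf.div hg).mono_ac (withDensity_absolutelyContinuous _ _)
  refine hμ_ac.ae_eq (Measure.eq_rnDeriv₀ hfg Measure.MutuallySingular.zero_left ?_).symm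
  rw [zero_add, hdens]

lemma klDiv_withDensity_ofReal {φ ψ : X → ℝ}
    [SigmaFinite (μ.withDensity fun x => ENNReal.ofReal (ψ x))]
    (hφ : AEMeasurable φ μ) (hψ : AEMeasurable ψ μ)
    (hφ_pos : ∀ᵐ x ∂μ, 0 < φ x) (hψ_pos : ∀ᵐ x ∂μ, 0 < ψ x) :
    klDiv (μ.withDensity fun x => ENNReal.ofReal (φ x))
        (μ.withDensity fun x => ENNReal.ofReal (ψ x)) =
      ∫ x, Real.log (φ x) - Real.log (ψ x) ∂μ.withDensity fun x => ENNReal.ofReal (φ x) := by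
  have hrn := rnDeriv_withDensity_withDensity hφ.ennreal_ofReal hψ.ennreal_ofReal
    (hψ_pos.mono fun x hx => (ENNReal.ofReal_pos.mpr hx).ne')
    (ae_of_all _ fun _ => ENNReal.ofReal_ne_top)
  refine integral_congr_ae (withDensity_absolutelyContinuous _ _ ?_)
  filter_upwards [hrn, hφ_pos, hψ_pos] with x hx hφx hψx
  rw [hx, Pi.div_apply, ← ENNReal.ofReal_div_of_pos hψx,
    ENNReal.toReal_ofReal (div_pos hφx hψx).le, Real.log_div hφx.ne' hψx.ne']

lemma integral_div_withDensity_ofReal {φ : X → ℝ} (h : X → ℝ) (hφ : AEMeasurable φ μ)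
    (hφ_pos : ∀ᵐ x ∂μ, 0 < φ x) :
    ∫ x, h x / φ x ∂μ.withDensity (fun x => ENNReal.ofReal (φ x)) = ∫ x, h x ∂μ := by
  rw [integral_withDensity_eq_integral_toReal_smul₀ hφ.ennreal_ofReal
    (ae_of_all _ fun _ => ENNReal.ofReal_lt_top)]
  refine integral_congr_ae ?_
  filter_upwards [hφ_pos] with x hx
  rw [ENNReal.toReal_ofReal hx.le, smul_eq_mul, mul_div_cancel₀ _ hx.ne']

noncomputable def withNormalizedDensity (μ : Measure X) (g : X → ℝ) : Measure X :=
  μ.withDensity fun x => ENNReal.ofReal (g x / ∫ x, g x ∂μ)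

lemma isProbabilityMeasure_withNormalizedDensity {g : X → ℝ} (hg_nonneg : 0 ≤ᵐ[μ] g)
    (hg_int : Integrable g μ) (hg_pos : 0 < ∫ x, g x ∂μ) :
    IsProbabilityMeasure (withNormalizedDensity μ g) := by
  constructor
  rw [withNormalizedDensity, withDensity_apply _ MeasurableSet.univ, Measure.restrict_univ,
    ← ofReal_integral_eq_lintegral_ofReal (hg_int.div_const _)
      (hg_nonneg.mono fun x hx => div_nonneg hx hg_pos.le),
    integral_div, div_self hg_pos.ne', ENNReal.ofReal_one]

variable {ℓ g : X → ℝ}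

lemma integral_div_withNormalizedDensity (hℓ : AEMeasurable ℓ μ) (hℓ_pos : ∀ᵐ x ∂μ, 0 < ℓ x)
    (hZ_pos : 0 < ∫ x, ℓ x ∂μ) :
    ∫ x, g x / ℓ x ∂withNormalizedDensity μ ℓ = (∫ x, g x ∂μ) / ∫ x, ℓ x ∂μ := by
  have hdiv : ∀ x, g x / ℓ x = (g x / ∫ x, ℓ x ∂μ) / (ℓ x / ∫ x, ℓ x ∂μ) := fun x =>
    (div_div_div_cancel_right₀ hZ_pos.ne' _ _).symm
  simp only [hdiv]
  rw [withNormalizedDensity, integral_div_withDensity_ofReal _ (hℓ.div_const _)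
    (hℓ_pos.mono fun x hx => div_pos hx hZ_pos), integral_div]

lemma klDiv_withNormalizedDensity (hℓ_pos : ∀ᵐ x ∂μ, 0 < ℓ x) (hℓ_int : Integrable ℓ μ)
    (hZ_pos : 0 < ∫ x, ℓ x ∂μ) (hg_pos : ∀ᵐ x ∂μ, 0 < g x) (hg_int : Integrable g μ)
    (hZg_pos : 0 < ∫ x, g x ∂μ)
    (hlogℓ_int : Integrable (fun x => Real.log (ℓ x)) (withNormalizedDensity μ ℓ))
    (hlogg_int : Integrable (fun x => Real.log (g x)) (withNormalizedDensity μ ℓ)) :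
    klDiv (withNormalizedDensity μ ℓ) (withNormalizedDensity μ g) =
      (∫ x, Real.log (ℓ x) ∂withNormalizedDensity μ ℓ) -
        (∫ x, Real.log (g x) ∂withNormalizedDensity μ ℓ) +
        Real.log ((∫ x, g x ∂μ) / ∫ x, ℓ x ∂μ) := by
  set Z := ∫ x, ℓ x ∂μ
  set Zg := ∫ x, g x ∂μ
  have : IsProbabilityMeasure (withNormalizedDensity μ ℓ) :=
    isProbabilityMeasure_withNormalizedDensity (hℓ_pos.mono fun _ hx => hx.le) hℓ_int hZ_pos
  have : IsFiniteMeasure (μ.withDensity fun x => ENNReal.ofReal (g x / Zg)) :=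
    isFiniteMeasure_withDensity_ofReal (hg_int.div_const Zg).hasFiniteIntegral
  have hlog_ratio : ∀ᵐ x ∂withNormalizedDensity μ ℓ,
      Real.log (ℓ x / Z) - Real.log (g x / Zg) =
        Real.log (ℓ x) - Real.log (g x) + Real.log (Zg / Z) := by
    refine withDensity_absolutelyContinuous _ _ ?_
    filter_upwards [hℓ_pos, hg_pos] with x hℓx hgx
    rw [Real.log_div hℓx.ne' hZ_pos.ne', Real.log_div hgx.ne' hZg_pos.ne',
      Real.log_div hZg_pos.ne' hZ_pos.ne']
    ring
  calc klDiv (withNormalizedDensity μ ℓ) (withNormalizedDensity μ g)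
      = ∫ x, Real.log (ℓ x / Z) - Real.log (g x / Zg) ∂withNormalizedDensity μ ℓ :=
        klDiv_withDensity_ofReal (hℓ_int.aemeasurable.div_const Z)
          (hg_int.aemeasurable.div_const Zg) (hℓ_pos.mono fun x hx => div_pos hx hZ_pos)
          (hg_pos.mono fun x hx => div_pos hx hZg_pos)
    _ = ∫ x, Real.log (ℓ x) - Real.log (g x) + Real.log (Zg / Z) ∂withNormalizedDensity μ ℓ :=
        integral_congr_ae hlog_ratio
    _ = _ := by
      rw [integral_add (f := fun x => Real.log (ℓ x) - Real.log (g x)) (hlogℓ_int.sub hlogg_int)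
          (integrable_const _),
        integral_sub hlogℓ_int hlogg_int, integral_const, probReal_univ, one_smul]

end

lemma isMinOn_iff_isMaxOn_of_eq_const_sub {α β : Type*} [AddCommGroup β] [PartialOrder β]
    [IsOrderedAddMonoid β] {F G : α → β} {s : Set α} {a : α} (c : β)
    (hFG : ∀ x ∈ s, F x = c - G x) (ha : a ∈ s) : IsMinOn F s a ↔ IsMaxOn G s a := by
  rw [isMinOn_iff, isMaxOn_iff]
  refine forall₂_congr fun x hx => ?_
  rw [hFG a ha, hFG x hx, sub_le_sub_iff_left]

theorem two_level_single_group_objective_general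
    {X : Type*} [MeasurableSpace X] (μ : Measure X)
    (ℓ : X → ℝ) (hℓ_pos : ∀ᵐ x ∂μ, 0 < ℓ x)
    (hℓ_int : Integrable ℓ μ) (hZ_pos : 0 < ∫ x, ℓ x ∂μ)
    (p : Measure X)
    (hp : p = μ.withDensity (fun x => ENNReal.ofReal (ℓ x / ∫ x, ℓ x ∂μ)))
    (Mhat : ℕ) (f : Fin Mhat → X → ℝ)
    (gw : (Fin Mhat → ℝ) → X → ℝ)
    (hgw : ∀ w x, gw w x = ∑ i : Fin Mhat, w i * f i x)
    (W : Set (Fin Mhat → ℝ))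
    (hW_pos_ae : ∀ w ∈ W, ∀ᵐ x ∂μ, 0 < gw w x)
    (hW_int : ∀ w ∈ W, Integrable (gw w) μ)
    (hW_pos : ∀ w ∈ W, 0 < ∫ x, gw w x ∂μ)
    (hlogℓ_int : Integrable (fun x => Real.log (ℓ x)) p)
    (hW_loggw_int : ∀ w ∈ W, Integrable (fun x => Real.log (gw w x)) p)
    (q : (Fin Mhat → ℝ) → Measure X)
    (hq : ∀ w, q w =
      μ.withDensity (fun x => ENNReal.ofReal (gw w x / ∫ x, gw w x ∂μ)))
    (J : (Fin Mhat → ℝ) → ℝ)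
    (hJ : ∀ w, J w =
      (∫ x, Real.log (∑ i : Fin Mhat, w i * f i x) ∂p) -
        Real.log (∫ x, Real.exp (Real.log (∑ i : Fin Mhat, w i * f i x) -
          Real.log (ℓ x)) ∂p)) :
    (∀ w ∈ W, klDiv p (q w) = (∫ x, Real.log (ℓ x) ∂p) - J w) ∧
      (∀ wstar ∈ W,
        IsMinOn (fun w => klDiv p (q w)) W wstar ↔ IsMaxOn J W wstar) := by
  obtain rfl : p = withNormalizedDensity μ ℓ := hp
  obtain rfl : q = fun w => withNormalizedDensity μ (gw w) := funext hq
  simp only [← hgw] at hJ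
  have hJ_eq : ∀ w ∈ W,
      J w = (∫ x, Real.log (gw w x) ∂withNormalizedDensity μ ℓ) -
        Real.log ((∫ x, gw w x ∂μ) / ∫ x, ℓ x ∂μ) := by
    intro w hw
    have hexp : ∀ᵐ x ∂withNormalizedDensity μ ℓ,
        Real.exp (Real.log (gw w x) - Real.log (ℓ x)) = gw w x / ℓ x := by
      refine withDensity_absolutelyContinuous _ _ ?_
      filter_upwards [hℓ_pos, hW_pos_ae w hw] with x hℓx hgx
      rw [Real.exp_sub, Real.exp_log hgx, Real.exp_log hℓx]
    rw [hJ w, integral_congr_ae hexp,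
      integral_div_withNormalizedDensity hℓ_int.aemeasurable hℓ_pos hZ_pos]
  have hkl : ∀ w ∈ W, klDiv (withNormalizedDensity μ ℓ) (withNormalizedDensity μ (gw w)) =
      (∫ x, Real.log (ℓ x) ∂withNormalizedDensity μ ℓ) - J w := by
    intro w hw
    rw [klDiv_withNormalizedDensity hℓ_pos hℓ_int hZ_pos (hW_pos_ae w hw) (hW_int w hw)
      (hW_pos w hw) hlogℓ_int (hW_loggw_int w hw), hJ_eq w hw]
    ring
  exact ⟨hkl, fun _ hwstar => isMinOn_iff_isMaxOn_of_eq_const_sub _ hkl hwstar⟩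

/-- two-level objective, single group. With posterior `p` of
density `ℓ/Z` w.r.t. `μ`, virtual-observation likelihoods `f i ≥ 0`, mixture
likelihood `gw w x = ∑ i, w i * f i x` and reconstructed posterior `q w`, for
every admissible nonnegative weight vector `w ∈ W` we have
`KL(p ‖ q w) = ∫ log ℓ dp − J w`, where
`J w = ∫ log (∑ i, w i * f i) dp − log ∫ exp (log (∑ i, w i * f i) − log ℓ) dp`;
hence `w* ∈ W` minimizes the KL divergence over `W` iff it maximizes `J` over `W`. -/
theorem two_level_single_group_objective
    {X : Type*} [MeasurableSpace X] (μ : Measure X) [SigmaFinite μ]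
    (ℓ : X → ℝ) (hℓ_meas : Measurable ℓ) (hℓ_pos : ∀ᵐ x ∂μ, 0 < ℓ x)
    (hℓ_int : Integrable ℓ μ) (hZ_pos : 0 < ∫ x, ℓ x ∂μ)
    (p : Measure X)
    (hp : p = μ.withDensity (fun x => ENNReal.ofReal (ℓ x / ∫ x, ℓ x ∂μ)))
    (Mhat : ℕ) (f : Fin Mhat → X → ℝ)
    (hf_meas : ∀ i, Measurable (f i)) (hf_nonneg : ∀ i x, 0 ≤ f i x)
    (gw : (Fin Mhat → ℝ) → X → ℝ)
    (hgw : ∀ w x, gw w x = ∑ i : Fin Mhat, w i * f i x)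
    (W : Set (Fin Mhat → ℝ))
    (hW_nonneg : ∀ w ∈ W, ∀ i, 0 ≤ w i)
    (hW_pos_ae : ∀ w ∈ W, ∀ᵐ x ∂μ, 0 < gw w x)
    (hW_int : ∀ w ∈ W, Integrable (gw w) μ)
    (hW_pos : ∀ w ∈ W, 0 < ∫ x, gw w x ∂μ)
    (hlogℓ_int : Integrable (fun x => Real.log (ℓ x)) p)
    (hW_loggw_int : ∀ w ∈ W, Integrable (fun x => Real.log (gw w x)) p)
    (q : (Fin Mhat → ℝ) → Measure X)
    (hq : ∀ w, q w =
      μ.withDensity (fun x => ENNReal.ofReal (gw w x / ∫ x, gw w x ∂μ)))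
    (J : (Fin Mhat → ℝ) → ℝ)
    (hJ : ∀ w, J w =
      (∫ x, Real.log (∑ i : Fin Mhat, w i * f i x) ∂p) -
        Real.log (∫ x, Real.exp (Real.log (∑ i : Fin Mhat, w i * f i x) -
          Real.log (ℓ x)) ∂p)) :
    (∀ w ∈ W, klDiv p (q w) = (∫ x, Real.log (ℓ x) ∂p) - J w) ∧
      (∀ wstar ∈ W,
        IsMinOn (fun w => klDiv p (q w)) W wstar ↔ IsMaxOn J W wstar) :=
  two_level_single_group_objective_general μ ℓ hℓ_pos hℓ_int hZ_pos p hp Mhat f gw hgw W hW_pos_ae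
    hW_int hW_pos hlogℓ_int hW_loggw_int q hq J hJ
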